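/- arXiv:2605.31344 — 6 statements merged into one kernel-verified Lean document; each statement's English description precedes it below -/
import Mathlib

section
/- For β > 0 and s ≥ s' > 0, the function t ↦ (exp(βst) - exp(-βst)) / (exp(βs't) - exp(-βs't)) is monotone nondecreasing on (0, ∞). -/
/-!
Writing `exp u - exp (-u) = 2 sinh u`, the function is `t ↦ sinh (a t) / sinh (b t)` with
`a = βs ≥ b = βs' > 0`. Its derivative has the sign of `a cosh (at) sinh (bt) - b sinh (at) cosh (bt)`,
which by the addition formulas equals `((a - b) sinh ((a + b) t) - (a + b) sinh ((a - b) t)) / 2`.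
This is nonnegative because `sinh` is convex on `[0, ∞)` and vanishes at `0`, so `sinh x / x`
is nondecreasing there.
-/

open Real Set

namespace Real

lemma convexOn_sinh : ConvexOn ℝ (Ici 0) sinh := by
  refine MonotoneOn.convexOn_of_deriv (convex_Ici 0) continuous_sinh.continuousOn
    differentiable_sinh.differentiableOn ?_
  rw [deriv_sinh, interior_Ici]
  intro x hx y hy hxy
  rw [cosh_le_cosh, abs_of_pos hx, abs_of_pos hy]
  exact hxy

lemma mul_sinh_le_mul_sinh {x y : ℝ} (hx : 0 ≤ x) (hxy : x ≤ y) :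
    y * sinh x ≤ x * sinh y := by
  rcases hx.eq_or_lt with rfl | hx
  · simp
  have hy : 0 < y := hx.trans_le hxy
  have hslope := convexOn_sinh.secant_mono self_mem_Ici hx.le hy.le hx.ne' hy.ne' hxy
  simp only [sinh_zero, sub_zero] at hslope
  rw [div_le_div_iff₀ hx hy] at hslope
  linarith

lemma mul_sinh_mul_cosh_mul_le {a b t : ℝ} (hb : 0 ≤ b) (hba : b ≤ a) (ht : 0 < t) :
    b * (sinh (a * t) * cosh (b * t)) ≤ a * (cosh (a * t) * sinh (b * t)) := by
  have hsecant := mul_sinh_le_mul_sinh (x := (a - b) * t) (y := (a + b) * t)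
    (by nlinarith) (by nlinarith)
  rw [add_mul, sub_mul, sinh_add, sinh_sub] at hsecant
  nlinarith

lemma monotoneOn_sinh_mul_div_sinh_mul {a b : ℝ} (hb : 0 < b) (hba : b ≤ a) :
    MonotoneOn (fun t => sinh (a * t) / sinh (b * t)) (Ioi 0) := by
  have hsinh_pos : ∀ t ∈ Ioi (0 : ℝ), 0 < sinh (b * t) := fun t ht =>
    sinh_pos_iff.2 (mul_pos hb ht)
  have hderiv : ∀ t ∈ Ioi (0 : ℝ), HasDerivAt (fun t => sinh (a * t) / sinh (b * t))
      ((cosh (a * t) * a * sinh (b * t) - sinh (a * t) * (cosh (b * t) * b)) /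
        sinh (b * t) ^ 2) t := fun t ht =>
    ((hasDerivAt_const_mul a).sinh.div (hasDerivAt_const_mul b).sinh (hsinh_pos t ht).ne')
  refine monotoneOn_of_deriv_nonneg (convex_Ioi 0) ?_ ?_ ?_
  · exact fun t ht => (hderiv t ht).continuousAt.continuousWithinAt
  · rw [interior_Ioi]
    exact fun t ht => (hderiv t ht).differentiableAt.differentiableWithinAt
  · rw [interior_Ioi]
    intro t ht
    rw [(hderiv t ht).deriv]
    have hnum := mul_sinh_mul_cosh_mul_le hb.le hba ht
    exact div_nonneg (by linarith) (sq_nonneg _)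

lemma exp_sub_exp_neg (x : ℝ) : exp x - exp (-x) = 2 * sinh x := by
  rw [sinh_eq]; ring

end Real

theorem stmt_1 (β s s' : ℝ) (hβ : 0 < β) (hs' : 0 < s') (hss : s' ≤ s) :
    MonotoneOn (fun t : ℝ =>
      (Real.exp (β * s * t) - Real.exp (-(β * s * t))) /
      (Real.exp (β * s' * t) - Real.exp (-(β * s' * t)))) (Set.Ioi 0) := by
  simp only [exp_sub_exp_neg, mul_div_mul_left _ _ (two_ne_zero (α := ℝ))]
  exact monotoneOn_sinh_mul_div_sinh_mul (mul_pos hβ hs') (mul_le_mul_of_nonneg_left hss hβ.le)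
end

section
/- Let μ be a probability measure on {0,1}^E satisfying the FKG inequality, let f: {0,1}^E → [0,1] be an increasing function, let C_x = {ω_{e_i} = 0 for all i = 1,…,d} be the event that all edges incident to a vertex x are closed, and assume μ[C_x] > 0. Then μ[f] - μ[f | C_x] ≤ (1/μ[C_x]) Σ_{i=1}^d Cov_μ(f, ω_{e_i}). -/
/-!
Write `C = C_x`. Since `𝟙_{Cᶜ} = 1 - 𝟙_C`, one has `μ[f] - μ[f | C] = Cov(f, 𝟙_{Cᶜ}) / μ(C)`, and
`Cᶜ` is the union of the increasing events `A_i = {ω_{e_i} = 1}`. Inclusion–exclusion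
`𝟙_{A ∪ B} = 𝟙_A + 𝟙_B - 𝟙_{A ∩ B}` together with FKG for the increasing event `A ∩ B` makes
`A ↦ Cov(f, 𝟙_A)` subadditive on increasing events, so `Cov(f, 𝟙_{Cᶜ}) ≤ ∑ᵢ Cov(f, ω_{e_i})`.
-/

open MeasureTheory ProbabilityTheory Finset

lemma IsUpperSet.monotone_indicator_one {α : Type*} [Preorder α] {U : Set α} (hU : IsUpperSet U) :
    Monotone (U.indicator (1 : α → ℝ)) := by
  intro a b hab
  by_cases ha : a ∈ U
  · simp [ha, hU hab ha]
  · rw [Set.indicator_of_notMem ha]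
    exact Set.indicator_nonneg (fun _ _ ↦ zero_le_one) b

lemma MeasureTheory.memLp_indicator_one {Ω : Type*} [MeasurableSpace Ω] {μ : Measure Ω}
    [IsFiniteMeasure μ] {s : Set Ω} (hs : MeasurableSet s) (p : ENNReal) :
    MemLp (s.indicator (1 : Ω → ℝ)) p μ :=
  memLp_indicator_const p hs 1 (.inr (measure_ne_top μ s))

namespace ProbabilityTheory

variable {Ω : Type*} [MeasurableSpace Ω] {μ : Measure Ω} {f : Ω → ℝ}

lemma covariance_indicator_union_le [IsFiniteMeasure μ] (hf : MemLp f 2 μ) {s t : Set Ω}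
    (hs : MeasurableSet s) (ht : MeasurableSet t) (hst : 0 ≤ cov[f, (s ∩ t).indicator 1; μ]) :
    cov[f, (s ∪ t).indicator 1; μ] ≤ cov[f, s.indicator 1; μ] + cov[f, t.indicator 1; μ] := by
  have hunion : (s ∪ t).indicator 1 =
      s.indicator 1 + t.indicator 1 - (s ∩ t).indicator (1 : Ω → ℝ) := by
    ext x
    simp only [Pi.add_apply, Pi.sub_apply]
    linarith [Set.indicator_union_add_inter_apply (1 : Ω → ℝ) s t x]
  have h1 := memLp_indicator_one (μ := μ) hs 2
  have h2 := memLp_indicator_one (μ := μ) ht 2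
  rw [hunion, covariance_sub_right hf (h1.add h2) (memLp_indicator_one (hs.inter ht) 2),
    covariance_add_right hf h1 h2]
  linarith

lemma covariance_indicator_biUnion_le [Preorder Ω] [IsFiniteMeasure μ] (hf : MemLp f 2 μ)
    (hFKG : ∀ U, IsUpperSet U → MeasurableSet U → 0 ≤ cov[f, U.indicator 1; μ])
    {ι : Type*} (s : Finset ι) {A : ι → Set Ω} (hA : ∀ i, IsUpperSet (A i))
    (hAm : ∀ i, MeasurableSet (A i)) :
    cov[f, (⋃ i ∈ s, A i).indicator 1; μ] ≤ ∑ i ∈ s, cov[f, (A i).indicator 1; μ] := by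
  classical
  induction s using Finset.induction_on with
  | empty => simp [covariance]
  | insert a s ha ih =>
    have hUm : MeasurableSet (⋃ i ∈ s, A i) := s.measurableSet_biUnion fun i _ ↦ hAm i
    have hU : IsUpperSet (⋃ i ∈ s, A i) := isUpperSet_iUnion₂ fun i _ ↦ hA i
    rw [Finset.set_biUnion_insert, sum_insert ha]
    linarith [covariance_indicator_union_le hf (hAm a) hUm
      (hFKG _ ((hA a).inter hU) ((hAm a).inter hUm))]

lemma covariance_indicator_one [IsProbabilityMeasure μ] (hf : MemLp f 2 μ) {s : Set Ω}
    (hs : MeasurableSet s) :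
    cov[f, s.indicator 1; μ] = ∫ x in s, f x ∂μ - (∫ x, f x ∂μ) * μ.real s := by
  rw [covariance_eq_sub hf (memLp_indicator_one hs 2), integral_indicator_one hs,
    ← integral_indicator hs]
  congr 2
  ext x
  by_cases hx : x ∈ s <;> simp [hx]

lemma integral_sub_setIntegral_div_eq [IsProbabilityMeasure μ] (hf : MemLp f 2 μ) {s : Set Ω}
    (hs : MeasurableSet s) (hμs : μ.real s ≠ 0) :
    ∫ x, f x ∂μ - (∫ x in s, f x ∂μ) / μ.real s = cov[f, sᶜ.indicator 1; μ] / μ.real s := by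
  have hone : cov[f, (1 : Ω → ℝ); μ] = 0 := covariance_const_right 1
  rw [Set.indicator_compl,
    covariance_sub_right (Y := 1) hf (memLp_const 1) (memLp_indicator_one hs 2), hone,
    covariance_indicator_one hf hs]
  field_simp
  ring

end ProbabilityTheory

open MeasureTheory in
theorem stmt_6_general {E : Type*} [Fintype E] (μ : Measure (E → Bool)) [IsProbabilityMeasure μ]
    (hFKG : ∀ f g : (E → Bool) → ℝ, Monotone f → Monotone g →
      (∫ ω, f ω ∂μ) * (∫ ω, g ω ∂μ) ≤ ∫ ω, f ω * g ω ∂μ)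
    (d : ℕ) (e : Fin d → E) (f : (E → Bool) → ℝ) (hf : Monotone f)
    (Cx : Set (E → Bool)) (hCx : Cx = {ω | ∀ i, ω (e i) = false})
    (hpos : 0 < (μ Cx).toReal) :
    (∫ ω, f ω ∂μ) - (∫ ω in Cx, f ω ∂μ) / (μ Cx).toReal
      ≤ (1 / (μ Cx).toReal) *
        ∑ i : Fin d, ((∫ ω, f ω * (if ω (e i) then (1:ℝ) else 0) ∂μ)
          - (∫ ω, f ω ∂μ) * (∫ ω, (if ω (e i) then (1:ℝ) else 0) ∂μ)) := by
  have hmeas (s : Set (E → Bool)) : MeasurableSet s := s.to_countable.measurableSet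
  have hf2 : MemLp f 2 μ := .of_discrete
  have hcov_nonneg (U : Set (E → Bool)) (hU : IsUpperSet U) (_ : MeasurableSet U) :
      0 ≤ cov[f, U.indicator 1; μ] := by
    rw [covariance_eq_sub hf2 .of_discrete]
    exact sub_nonneg.2 (hFKG f _ hf hU.monotone_indicator_one)
  let A (i : Fin d) : Set (E → Bool) := {ω | ω (e i) = true}
  have hA (i : Fin d) : IsUpperSet (A i) := fun ω ω' hle (hω : ω (e i) = true) ↦
    Bool.eq_true_of_true_le (hω ▸ hle (e i))
  have hCc : Cxᶜ = ⋃ i ∈ univ, A i := by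
    ext ω
    simp [hCx, A]
  have hcovA (i : Fin d) : cov[f, (A i).indicator 1; μ] =
      (∫ ω, f ω * (if ω (e i) then (1:ℝ) else 0) ∂μ)
        - (∫ ω, f ω ∂μ) * (∫ ω, (if ω (e i) then (1:ℝ) else 0) ∂μ) := by
    rw [covariance_eq_sub hf2 .of_discrete]
    simp [A, Set.indicator_apply]
  rw [← measureReal_def, integral_sub_setIntegral_div_eq hf2 (hmeas Cx) hpos.ne', hCc,
    one_div_mul_eq_div]
  simp_rw [← hcovA]
  gcongr
  exact covariance_indicator_biUnion_le hf2 hcov_nonneg univ hA fun i ↦ hmeas _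

open MeasureTheory in
theorem stmt_6 {E : Type*} [Fintype E] (μ : Measure (E → Bool)) [IsProbabilityMeasure μ]
    (hFKG : ∀ f g : (E → Bool) → ℝ, Monotone f → Monotone g →
      (∫ ω, f ω ∂μ) * (∫ ω, g ω ∂μ) ≤ ∫ ω, f ω * g ω ∂μ)
    (d : ℕ) (e : Fin d → E) (f : (E → Bool) → ℝ) (hf : Monotone f)
    (hf01 : ∀ ω, f ω ∈ Set.Icc (0:ℝ) 1)
    (Cx : Set (E → Bool)) (hCx : Cx = {ω | ∀ i, ω (e i) = false})
    (hpos : 0 < (μ Cx).toReal) :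
    (∫ ω, f ω ∂μ) - (∫ ω in Cx, f ω ∂μ) / (μ Cx).toReal
      ≤ (1 / (μ Cx).toReal) *
        ∑ i : Fin d, ((∫ ω, f ω * (if ω (e i) then (1:ℝ) else 0) ∂μ)
          - (∫ ω, f ω ∂μ) * (∫ ω, (if ω (e i) then (1:ℝ) else 0) ∂μ)) :=
  stmt_6_general μ hFKG d e f hf Cx hCx hpos
end

section
/- Fix β > 0 and let p(a) = 1 - e^{-2βa} for a > 0 and g(a) = (1 - e^{-2βa})·1_{2βa < 1} + (1 - e^{-1})·1_{2βa ≥ 1}. Then the function a ↦ g(a)·a/p(a) is nondecreasing on (0,∞), and g(a)·a/p(a) ≥ g(a)/(2β) for all a > 0. -/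
lemma convexOn_exp_neg' : ConvexOn ℝ Set.univ (fun x : ℝ => Real.exp (-x)) := by
  refine ⟨convex_univ, fun x _ y _ a b ha hb hab => ?_⟩
  have := convexOn_exp.2 (Set.mem_univ (-x)) (Set.mem_univ (-y)) ha hb hab
  simpa [neg_add, mul_neg, smul_eq_mul, add_comm] using this

lemma key_ineq {s t : ℝ} (hs : 0 < s) (hst : s ≤ t) :
    s * (1 - Real.exp (-t)) ≤ t * (1 - Real.exp (-s)) := by
  have ht : 0 < t := lt_of_lt_of_le hs hst
  have h := convexOn_exp_neg'.secant_mono (a := 0) (x := s) (y := t)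
    (Set.mem_univ 0) (Set.mem_univ s) (Set.mem_univ t) hs.ne' ht.ne' hst
  simp only [neg_zero, Real.exp_zero, sub_zero] at h
  rw [div_le_div_iff₀ hs ht] at h
  nlinarith [h]

open Classical in
theorem stmt_8 (β : ℝ) (hβ : 0 < β)
    (p g : ℝ → ℝ)
    (hp : ∀ a, p a = 1 - Real.exp (-2 * β * a))
    (hg : ∀ a, g a = if 2 * β * a < 1 then 1 - Real.exp (-2 * β * a) else 1 - Real.exp (-1)) :
    MonotoneOn (fun a => g a * a / p a) (Set.Ioi 0) ∧
    (∀ a : ℝ, 0 < a → g a / (2 * β) ≤ g a * a / p a) := by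
  have h2β : (0:ℝ) < 2 * β := by linarith
  have hppos : ∀ a : ℝ, 0 < a → 0 < p a := by
    intro a ha
    rw [hp a]
    have : Real.exp (-2 * β * a) < 1 := by
      rw [Real.exp_lt_one_iff]; nlinarith
    linarith
  have hple : ∀ a : ℝ, 0 < a → p a ≤ 2 * β * a := by
    intro a ha
    rw [hp a]
    have := Real.add_one_le_exp (-2 * β * a)
    linarith
  have he1 : (0:ℝ) < 1 - Real.exp (-1) := by
    have : Real.exp (-1:ℝ) < 1 := by rw [Real.exp_lt_one_iff]; norm_num
    linarith
  constructor
  · intro a ha b hb hab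
    simp only [Set.mem_Ioi] at ha hb
    have hpa := hppos a ha
    have hpb := hppos b hb
    simp only
    by_cases hca : 2 * β * a < 1
    · have hva : g a * a / p a = a := by
        rw [hg a, if_pos hca, ← hp a]
        exact mul_div_cancel_left₀ a hpa.ne'
      rw [hva]
      by_cases hcb : 2 * β * b < 1
      · have hvb : g b * b / p b = b := by
          rw [hg b, if_pos hcb, ← hp b]
          exact mul_div_cancel_left₀ b hpb.ne'
        rw [hvb]; exact hab
      · rw [hg b, if_neg hcb]
        push_neg at hcb
        have h1 : a ≤ 1 / (2 * β) := by
          rw [le_div_iff₀ h2β]; nlinarith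
        have h2 : 1 / (2 * β) ≤ (1 - Real.exp (-1)) * b / p b := by
          have hk := key_ineq one_pos hcb
          rw [div_le_div_iff₀ h2β hpb, hp b]
          have heq : (-2 : ℝ) * β * b = -(2 * β * b) := by ring
          rw [heq]
          nlinarith [hk]
        linarith
    · push_neg at hca
      have hcb : ¬ (2 * β * b < 1) := by push_neg; nlinarith
      rw [hg a, if_neg (not_lt.mpr hca), hg b, if_neg hcb]
      push_neg at hcb
      rw [div_le_div_iff₀ hpa hpb, hp a, hp b]
      have hs : 0 < 2 * β * a := by positivity
      have hst : 2 * β * a ≤ 2 * β * b := by nlinarith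
      have := key_ineq hs hst
      have heq : (-2 : ℝ) * β * a = -(2 * β * a) := by ring
      have heq' : (-2 : ℝ) * β * b = -(2 * β * b) := by ring
      rw [heq, heq']
      nlinarith [he1, this]
  · intro a ha
    have hpa := hppos a ha
    have hga : 0 ≤ g a := by
      rw [hg a]
      split
      · rw [← hp a]; exact (hppos a ha).le
      · exact he1.le
    have h1 : 1 / (2 * β) ≤ a / p a := by
      rw [div_le_div_iff₀ h2β hpa]
      nlinarith [hple a ha]
    calc g a / (2 * β) = g a * (1 / (2 * β)) := by ring
      _ ≤ g a * (a / p a) := by exact mul_le_mul_of_nonneg_left h1 hga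
      _ = g a * a / p a := by ring
end

section
/- Let μ be a probability measure assigning to configurations (a,ω) a density proportional to Π_{e∈E} w_β(a_e, ω_e) dρ(a) where w_β(t, ω) = e^{-βt}(e^{2βt}-1)^ω for t ≥ 0 depending smoothly on β, on a finite edge set E with a_e ≥ 0. Then for any bounded measurable f, (d/dβ) μ[f] = Σ_{e∈E} Cov_μ(f, 2 a_e ω_e / (1 - e^{-2β a_e}) - a_e), with the convention that 2a_e ω_e/(1-e^{-2βa_e}) = 0 when a_e = 0. -/
/-
The edge weight factors as `w_b(t, o) = exp (b s) q_b(t, o)` with tilt `s = ±t` (sign `+` iff `o`)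
and `q_b = 1 - exp (-2bt)` if `o`, `q_b = 1` otherwise; moreover `∂_b w_b = G_b w_b` with
`|G_b| ≤ t + 1/b`. Since `q_b ≤ 3 q_c` whenever `b ≤ 3c`, for `b ∈ [β/2, 3β/2]` the product weight
is at most `3^|E|` times the weight at `β/2` or at `3β/2`, according to the sign of the total tilt.
With the integrability of `(1 + ∑ |a_e|)` against the weights at these two points, this dominates
the `b`-derivatives of numerator and denominator of `μ_b[f]`, so both may be differentiated under
the integral sign, and the quotient rule gives the covariance formula.
-/

open Real MeasureTheory Finset

namespace RandomCluster

noncomputable def edgeWeight (b t : ℝ) (o : Bool) : ℝ :=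
  exp (-b * t) * (exp (2 * b * t) - 1) ^ (if o then (1:ℕ) else 0)

noncomputable def edgeLogDeriv (b t : ℝ) (o : Bool) : ℝ :=
  (if t = 0 then 0 else 2 * t * (if o then (1:ℝ) else 0) / (1 - exp (-2 * b * t))) - t

def tilt (t : ℝ) (o : Bool) : ℝ := if o then t else -t

lemma edgeWeight_false (b t : ℝ) : edgeWeight b t false = exp (-b * t) := by
  simp [edgeWeight]

lemma edgeWeight_true (b t : ℝ) : edgeWeight b t true = exp (b * t) - exp (-b * t) := by
  simp only [edgeWeight, if_true, pow_one, mul_sub, ← exp_add, mul_one]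
  ring_nf

lemma edgeWeight_eq_exp_mul (b t : ℝ) (o : Bool) :
    edgeWeight b t o = exp (b * tilt t o) * (if o then 1 - exp (-(2 * b * t)) else 1) := by
  cases o
  · simp [edgeWeight_false, tilt]
  · simp only [edgeWeight_true, tilt, if_true, mul_sub, ← exp_add, mul_one]
    ring_nf

lemma edgeWeight_nonneg {b t : ℝ} (hbt : 0 ≤ b * t) (o : Bool) : 0 ≤ edgeWeight b t o := by
  cases o
  · simp only [edgeWeight_false]; positivity
  · simp only [edgeWeight_true, sub_nonneg, exp_le_exp]; linarith

lemma edgeWeight_le_three_mul {b c t : ℝ} (hc : 0 ≤ c) (hbc : b ≤ 3 * c) (ht : 0 ≤ t)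
    (o : Bool) : edgeWeight b t o ≤ 3 * exp ((b - c) * tilt t o) * edgeWeight c t o := by
  have hsplit : exp (b * tilt t o) = exp ((b - c) * tilt t o) * exp (c * tilt t o) := by
    rw [← exp_add]; ring_nf
  rw [edgeWeight_eq_exp_mul, edgeWeight_eq_exp_mul, hsplit]
  cases o
  · simp only [Bool.false_eq_true, if_false, mul_one]
    nlinarith [mul_pos (exp_pos ((b - c) * tilt t false)) (exp_pos (c * tilt t false))]
  · simp only [if_true]
    -- with `y = exp (-(2ct))`: `1 - exp (-(2bt)) ≤ 1 - y³ = (1 - y)(1 + y + y²) ≤ 3 (1 - y)`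
    set y := exp (-(2 * c * t))
    have hy1 : y ≤ 1 := exp_le_one_iff.mpr (by nlinarith)
    have hy0 : 0 < y := exp_pos _
    have hcube : y ^ 3 ≤ exp (-(2 * b * t)) := by
      rw [← exp_nat_mul, exp_le_exp]; push_cast; nlinarith
    have : 1 - exp (-(2 * b * t)) ≤ 3 * (1 - y) := by
      nlinarith [mul_nonneg (mul_self_nonneg (1 - y)) (by linarith : (0:ℝ) ≤ y + 2)]
    have hpos := mul_pos (exp_pos ((b - c) * tilt t true)) (exp_pos (c * tilt t true))
    nlinarith

lemma hasDerivAt_edgeWeight {b : ℝ} (hb : b ≠ 0) (t : ℝ) (o : Bool) :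
    HasDerivAt (edgeWeight · t o) (edgeLogDeriv b t o * edgeWeight b t o) b := by
  rcases eq_or_ne t 0 with rfl | ht
  · simpa [edgeWeight, edgeLogDeriv] using hasDerivAt_const b (edgeWeight 0 0 o)
  have hexp : ∀ s : ℝ, HasDerivAt (fun b => exp (s * b * t)) (exp (s * b * t) * (s * t)) b :=
    fun s => by simpa using (((hasDerivAt_id b).const_mul s).mul_const t).exp
  cases o
  · simp only [edgeWeight_false]
    convert hexp (-1) using 1 <;> simp [edgeLogDeriv, ht, mul_comm]
  · have hD : 1 - exp (-2 * b * t) ≠ 0 := by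
      rw [sub_ne_zero, ne_comm, Ne, exp_eq_one_iff]; simp [hb, ht]
    have h : HasDerivAt (fun b => exp (b * t) - exp (-b * t))
        (exp (b * t) * t + exp (-b * t) * t) b := by
      simpa [sub_eq_add_neg] using (hexp 1).fun_sub (hexp (-1))
    simp only [edgeWeight_true]
    refine h.congr_deriv ?_
    have h1 : exp (-2 * b * t) * exp (b * t) = exp (-b * t) := by rw [← exp_add]; ring_nf
    rw [edgeLogDeriv, if_neg ht, if_pos rfl, ← h1]
    generalize exp (-2 * b * t) = y at hD ⊢
    field_simp
    ring

lemma abs_edgeLogDeriv_le {b t : ℝ} (hb : 0 < b) (ht : 0 ≤ t) (o : Bool) :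
    |edgeLogDeriv b t o| ≤ t + b⁻¹ := by
  rcases ht.eq_or_lt with rfl | ht
  · simp [edgeLogDeriv]; positivity
  rw [edgeLogDeriv, if_neg ht.ne', abs_le]
  set y := exp (-2 * b * t)
  have hD : 0 < 1 - y := by
    have : y < 1 := exp_lt_one_iff.mpr (by nlinarith)
    linarith
  -- `2t / (1 - y) ≤ 2t + 1/b` is `(1 + 2bt) y ≤ 1`, i.e. `1 + 2bt ≤ exp (2bt)`
  have hfrac : 2 * t / (1 - y) ≤ 2 * t + b⁻¹ := by
    have hy : y * exp (2 * b * t) = 1 := by rw [← exp_add]; ring_nf; exact exp_zero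
    have hyb : (2 * b * t + 1) * y ≤ 1 := by
      nlinarith [add_one_le_exp (2 * b * t), exp_pos (-2 * b * t)]
    have hexpand : b⁻¹ * ((2 * b * t + 1) * y) = 2 * t * y + b⁻¹ * y := by
      field_simp
    rw [div_le_iff₀ hD]
    nlinarith [mul_le_mul_of_nonneg_left hyb (inv_nonneg.2 hb.le)]
  have hb_inv := inv_pos.2 hb
  cases o
  · simp only [Bool.false_eq_true, if_false, mul_zero, zero_div, zero_sub]
    constructor <;> linarith
  · simp only [if_true, mul_one]
    constructor <;> linarith [div_nonneg (by positivity : 0 ≤ 2 * t) hD.le]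

lemma measurable_comp_edge {E : Type*} {g : ℝ → Bool → ℝ} (hg : ∀ o, Measurable (g · o)) (e : E) :
    Measurable fun x : (E → ℝ) × (E → Bool) => g (x.1 e) (x.2 e) :=
  (measurable_from_prod_countable_left (f := Function.uncurry g) hg).comp
    (f := fun x : (E → ℝ) × (E → Bool) => (x.1 e, x.2 e)) (by fun_prop)

lemma measurable_edgeLogDeriv {E : Type*} (b : ℝ) (e : E) :
    Measurable fun x : (E → ℝ) × (E → Bool) => edgeLogDeriv b (x.1 e) (x.2 e) :=
  measurable_comp_edge (fun o => by
    unfold edgeLogDeriv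
    exact (Measurable.ite (measurableSet_singleton 0) measurable_const (by fun_prop)).sub
      measurable_id) e

variable {E : Type*} [Fintype E]

noncomputable def configWeight (b : ℝ) (x : (E → ℝ) × (E → Bool)) : ℝ :=
  ∏ e, edgeWeight b (x.1 e) (x.2 e)

noncomputable def configLogDeriv (b : ℝ) (x : (E → ℝ) × (E → Bool)) : ℝ :=
  ∑ e, edgeLogDeriv b (x.1 e) (x.2 e)

def configTilt (x : (E → ℝ) × (E → Bool)) : ℝ :=
  ∑ e, tilt (x.1 e) (x.2 e)

lemma measurable_configWeight (b : ℝ) : Measurable (configWeight (E := E) b) :=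
  Finset.measurable_prod _ fun e _ =>
    measurable_comp_edge (fun o => by unfold edgeWeight; fun_prop) e

lemma measurable_configLogDeriv (b : ℝ) : Measurable (configLogDeriv (E := E) b) :=
  Finset.measurable_sum _ fun e _ => measurable_edgeLogDeriv b e

section

variable {x : (E → ℝ) × (E → Bool)}

lemma configWeight_nonneg {b : ℝ} (hb : 0 ≤ b) (hx : ∀ e, 0 ≤ x.1 e) : 0 ≤ configWeight b x :=
  prod_nonneg fun e _ => edgeWeight_nonneg (mul_nonneg hb (hx e)) _

lemma configWeight_le_three_pow_mul {b c : ℝ} (hb : 0 ≤ b) (hc : 0 ≤ c) (hbc : b ≤ 3 * c)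
    (hx : ∀ e, 0 ≤ x.1 e) :
    configWeight b x ≤ 3 ^ Fintype.card E * exp ((b - c) * configTilt x) * configWeight c x := by
  calc configWeight b x
      ≤ ∏ e, 3 * exp ((b - c) * tilt (x.1 e) (x.2 e)) * edgeWeight c (x.1 e) (x.2 e) :=
        prod_le_prod (fun e _ => edgeWeight_nonneg (mul_nonneg hb (hx e)) _)
          fun e _ => edgeWeight_le_three_mul hc hbc (hx e) _
    _ = _ := by
        rw [prod_mul_distrib, prod_mul_distrib, prod_const, card_univ, ← exp_sum, ← mul_sum]
        rfl

lemma configWeight_le_of_mem_Icc {b c₁ c₂ : ℝ} (hc₁ : 0 ≤ c₁) (hb : b ∈ Set.Icc c₁ c₂)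
    (hb₃ : b ≤ 3 * c₁) (hx : ∀ e, 0 ≤ x.1 e) :
    configWeight b x ≤ 3 ^ Fintype.card E * (configWeight c₁ x + configWeight c₂ x) := by
  obtain ⟨h₁, h₂⟩ := hb
  have hP₁ := configWeight_nonneg hc₁ hx
  have hP₂ := configWeight_nonneg (hc₁.trans (h₁.trans h₂)) hx
  rcases le_total 0 (configTilt x) with hΛ | hΛ
  · have hexp : exp ((b - c₂) * configTilt x) ≤ 1 :=
      exp_le_one_iff.mpr (mul_nonpos_of_nonpos_of_nonneg (by linarith) hΛ)
    calc configWeight b x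
        ≤ 3 ^ Fintype.card E * exp ((b - c₂) * configTilt x) * configWeight c₂ x :=
          configWeight_le_three_pow_mul (hc₁.trans h₁) (hc₁.trans (h₁.trans h₂)) (by linarith) hx
      _ ≤ 3 ^ Fintype.card E * 1 * configWeight c₂ x := by gcongr
      _ ≤ _ := by rw [mul_one]; gcongr; linarith
  · have hexp : exp ((b - c₁) * configTilt x) ≤ 1 :=
      exp_le_one_iff.mpr (mul_nonpos_of_nonneg_of_nonpos (by linarith) hΛ)
    calc configWeight b x
        ≤ 3 ^ Fintype.card E * exp ((b - c₁) * configTilt x) * configWeight c₁ x :=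
          configWeight_le_three_pow_mul (hc₁.trans h₁) hc₁ hb₃ hx
      _ ≤ 3 ^ Fintype.card E * 1 * configWeight c₁ x := by gcongr
      _ ≤ _ := by rw [mul_one]; gcongr; linarith

lemma hasDerivAt_configWeight {b : ℝ} (hb : b ≠ 0) (x : (E → ℝ) × (E → Bool)) :
    HasDerivAt (configWeight · x) (configLogDeriv b x * configWeight b x) b := by
  classical
  refine (HasDerivAt.fun_finsetProd (u := univ) fun e _ =>
    hasDerivAt_edgeWeight hb (x.1 e) (x.2 e)).congr_deriv ?_
  rw [configLogDeriv, sum_mul]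
  refine sum_congr rfl fun e _ => ?_
  rw [configWeight, ← mul_prod_erase univ _ (mem_univ e), smul_eq_mul]
  ring

lemma abs_configLogDeriv_le {b : ℝ} (hb : 0 < b) (hx : ∀ e, 0 ≤ x.1 e) :
    |configLogDeriv b x| ≤ (1 + Fintype.card E * b⁻¹) * (1 + ∑ e, |x.1 e|) := by
  have hsum : |configLogDeriv b x| ≤ ∑ e, |x.1 e| + Fintype.card E * b⁻¹ :=
    calc |configLogDeriv b x| ≤ ∑ e, |edgeLogDeriv b (x.1 e) (x.2 e)| := abs_sum_le_sum_abs _ _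
      _ ≤ ∑ e, (|x.1 e| + b⁻¹) := sum_le_sum fun e _ => by
          rw [abs_of_nonneg (hx e)]; exact abs_edgeLogDeriv_le hb (hx e) _
      _ = _ := by rw [sum_add_distrib, sum_const, card_univ, nsmul_eq_mul]
  have : 0 ≤ Fintype.card E * b⁻¹ := by positivity
  nlinarith [mul_nonneg this (sum_nonneg fun e (_ : e ∈ univ) => abs_nonneg (x.1 e))]

lemma abs_edgeLogDeriv_le_sum {b : ℝ} (hb : 0 < b) (hx : ∀ e, 0 ≤ x.1 e) (e : E) :
    |edgeLogDeriv b (x.1 e) (x.2 e)| ≤ (1 + b⁻¹) * (1 + ∑ e, |x.1 e|) := by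
  have hle : x.1 e ≤ ∑ e, |x.1 e| :=
    (le_abs_self _).trans (single_le_sum (fun i _ => abs_nonneg (x.1 i)) (mem_univ e))
  have := abs_edgeLogDeriv_le hb (hx e) (x.2 e)
  have : 0 ≤ b⁻¹ := by positivity
  nlinarith [mul_nonneg this (sum_nonneg fun e (_ : e ∈ univ) => abs_nonneg (x.1 e))]

lemma abs_configLogDeriv_mul_configWeight_le {b c₁ c₂ : ℝ} (hc₁ : 0 < c₁)
    (hb : b ∈ Set.Icc c₁ c₂) (hb₃ : b ≤ 3 * c₁) (hx : ∀ e, 0 ≤ x.1 e) :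
    |configLogDeriv b x * configWeight b x| ≤ (1 + Fintype.card E * c₁⁻¹) * 3 ^ Fintype.card E
      * ((1 + ∑ e, |x.1 e|) * configWeight c₁ x + (1 + ∑ e, |x.1 e|) * configWeight c₂ x) := by
  have hb₀ : 0 < b := hc₁.trans_le hb.1
  have hG : |configLogDeriv b x| ≤ (1 + Fintype.card E * c₁⁻¹) * (1 + ∑ e, |x.1 e|) := by
    refine (abs_configLogDeriv_le hb₀ hx).trans ?_
    gcongr
    exact hb.1
  rw [abs_mul, abs_of_nonneg (configWeight_nonneg hb₀.le hx)]
  calc |configLogDeriv b x| * configWeight b x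
      ≤ ((1 + Fintype.card E * c₁⁻¹) * (1 + ∑ e, |x.1 e|))
        * (3 ^ Fintype.card E * (configWeight c₁ x + configWeight c₂ x)) :=
        mul_le_mul hG (configWeight_le_of_mem_Icc hc₁.le hb hb₃ hx)
          (configWeight_nonneg hb₀.le hx) (by positivity)
    _ = _ := by ring

end

variable {ρ : Measure ((E → ℝ) × (E → Bool))}

lemma integrable_mul_configWeight {b : ℝ} (hb : 0 ≤ b) (hpos : ∀ᵐ x ∂ρ, ∀ e, 0 ≤ x.1 e)
    (hint : Integrable (fun x => (1 + ∑ e, |x.1 e|) * configWeight b x) ρ)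
    {g : (E → ℝ) × (E → Bool) → ℝ} (hg : AEStronglyMeasurable g ρ) {C : ℝ}
    (hgC : ∀ᵐ x ∂ρ, |g x| ≤ C * (1 + ∑ e, |x.1 e|)) :
    Integrable (fun x => g x * configWeight b x) ρ := by
  refine (hint.const_mul C).mono' (hg.mul (measurable_configWeight b).aestronglyMeasurable) ?_
  filter_upwards [hpos, hgC] with x hx hgx
  rw [Real.norm_eq_abs, abs_mul, abs_of_nonneg (configWeight_nonneg hb hx), ← mul_assoc]
  exact mul_le_mul_of_nonneg_right hgx (configWeight_nonneg hb hx)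

theorem hasDerivAt_integral_mul_configWeight (hpos : ∀ᵐ x ∂ρ, ∀ e, 0 ≤ x.1 e)
    (hint : ∀ b > 0, Integrable (fun x => (1 + ∑ e, |x.1 e|) * configWeight b x) ρ)
    {h : (E → ℝ) × (E → Bool) → ℝ} (hh : AEStronglyMeasurable h ρ) {M : ℝ}
    (hM : ∀ x, |h x| ≤ M) {β : ℝ} (hβ : 0 < β) :
    HasDerivAt (fun b => ∫ x, h x * configWeight b x ∂ρ)
      (∑ e, ∫ x, h x * edgeLogDeriv β (x.1 e) (x.2 e) * configWeight β x ∂ρ) β := by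
  have hM₀ : 0 ≤ M := (abs_nonneg _).trans (hM default)
  set K := (1 + Fintype.card E * (β / 2)⁻¹) * 3 ^ Fintype.card E
  have hdom : ∀ᵐ x ∂ρ, ∀ b ∈ Set.Ioo (β / 2) (3 * β / 2),
      ‖h x * (configLogDeriv b x * configWeight b x)‖ ≤ M * K
        * ((1 + ∑ e, |x.1 e|) * configWeight (β / 2) x
          + (1 + ∑ e, |x.1 e|) * configWeight (3 * β / 2) x) := by
    filter_upwards [hpos] with x hx b hb
    rw [Real.norm_eq_abs, abs_mul, mul_assoc]
    exact mul_le_mul (hM x) (abs_configLogDeriv_mul_configWeight_le (by positivity)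
      (Set.Ioo_subset_Icc_self hb) (by linarith [hb.2]) hx) (abs_nonneg _) hM₀
  obtain ⟨-, hderiv⟩ := hasDerivAt_integral_of_dominated_loc_of_deriv_le
    (F := fun b x => h x * configWeight b x)
    (Ioo_mem_nhds (by linarith) (by linarith))
    (.of_forall fun b => hh.mul (measurable_configWeight b).aestronglyMeasurable)
    (integrable_mul_configWeight hβ.le hpos (hint β hβ) hh (C := M)
      (.of_forall fun x => (hM x).trans (le_mul_of_one_le_right hM₀
        (le_add_of_nonneg_right (sum_nonneg fun e _ => abs_nonneg _)))))
    (hh.mul ((measurable_configLogDeriv β).mul (measurable_configWeight β)).aestronglyMeasurable)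
    hdom
    (((hint _ (by positivity)).add (hint _ (by positivity))).const_mul (M * K))
    (.of_forall fun x b hb =>
      (hasDerivAt_configWeight (by linarith [hb.1]) x).const_mul (h x))
  refine hderiv.congr_deriv ?_
  have hint_edge : ∀ e, Integrable
      (fun x => h x * edgeLogDeriv β (x.1 e) (x.2 e) * configWeight β x) ρ := fun e =>
    integrable_mul_configWeight hβ.le hpos (hint β hβ)
      (hh.mul (measurable_edgeLogDeriv β e).aestronglyMeasurable) (C := M * (1 + β⁻¹))
      (hpos.mono fun x hx => by
        rw [abs_mul, mul_assoc]
        exact mul_le_mul (hM x) (abs_edgeLogDeriv_le_sum hβ hx e) (abs_nonneg _) hM₀)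
  rw [← integral_finsetSum _ fun e _ => hint_edge e]
  congr 1 with x
  rw [configLogDeriv, sum_mul, mul_sum]
  exact sum_congr rfl fun e _ => (mul_assoc _ _ _).symm

end RandomCluster

open MeasureTheory in
theorem stmt_11_general {E : Type*} [Fintype E]
    (ρ : Measure ((E → ℝ) × (E → Bool)))
    (hpos : ∀ᵐ x ∂ρ, ∀ e, 0 ≤ x.1 e)
    (w : ℝ → ℝ → Bool → ℝ)
    (hw : ∀ b t o, w b t o
      = Real.exp (-b * t) * (Real.exp (2 * b * t) - 1) ^ (if o then (1:ℕ) else 0))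
    (Zpos : ∀ b > (0:ℝ), 0 < ∫ x, ∏ e, w b (x.1 e) (x.2 e) ∂ρ)
    (hint : ∀ b > (0:ℝ),
      Integrable (fun x => (1 + ∑ e, |x.1 e|) * ∏ e, w b (x.1 e) (x.2 e)) ρ)
    (f : (E → ℝ) × (E → Bool) → ℝ) (hfm : Measurable f)
    (M : ℝ) (hfb : ∀ x, |f x| ≤ M)
    (β : ℝ) (hβ : 0 < β)
    (G : E → (E → ℝ) × (E → Bool) → ℝ)
    (hG : ∀ e x, G e x = (if x.1 e = 0 then 0 else
      2 * x.1 e * (if x.2 e then (1:ℝ) else 0) / (1 - Real.exp (-2 * β * x.1 e))) - x.1 e)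
    (Ex : ℝ → ((E → ℝ) × (E → Bool) → ℝ) → ℝ)
    (hEx : ∀ b h, Ex b h = (∫ x, h x * ∏ e, w b (x.1 e) (x.2 e) ∂ρ)
      / (∫ x, ∏ e, w b (x.1 e) (x.2 e) ∂ρ)) :
    HasDerivAt (fun b => Ex b f)
      (∑ e : E, (Ex β (fun x => f x * G e x) - Ex β f * Ex β (G e))) β := by
  open RandomCluster in
  obtain rfl : w = edgeWeight := funext fun b => funext fun t => funext (hw b t)
  obtain rfl : G = fun e x => edgeLogDeriv β (x.1 e) (x.2 e) := funext fun e => funext (hG e)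
  have hEx' : ∀ b h, Ex b h = (∫ x, h x * configWeight b x ∂ρ) / ∫ x, configWeight b x ∂ρ :=
    hEx
  have hZ : ∫ x, configWeight β x ∂ρ ≠ 0 := (Zpos β hβ).ne'
  have hN := hasDerivAt_integral_mul_configWeight hpos hint hfm.aestronglyMeasurable hfb hβ
  have hD := hasDerivAt_integral_mul_configWeight hpos hint (h := fun _ => 1)
    aestronglyMeasurable_const (M := 1) (fun _ => by simp) hβ
  simp only [one_mul] at hD
  simp only [hEx']
  refine (hN.div hD hZ).congr_deriv ?_
  rw [sum_sub_distrib, ← sum_div, ← mul_sum, ← sum_div]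
  field_simp

open MeasureTheory in
theorem stmt_11 {E : Type*} [Fintype E]
    (ρ : Measure ((E → ℝ) × (E → Bool))) [IsFiniteMeasure ρ]
    (hpos : ∀ᵐ x ∂ρ, ∀ e, 0 ≤ x.1 e)
    (w : ℝ → ℝ → Bool → ℝ)
    (hw : ∀ b t o, w b t o
      = Real.exp (-b * t) * (Real.exp (2 * b * t) - 1) ^ (if o then (1:ℕ) else 0))
    (Zpos : ∀ b > (0:ℝ), 0 < ∫ x, ∏ e, w b (x.1 e) (x.2 e) ∂ρ)
    (hint : ∀ b > (0:ℝ),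
      Integrable (fun x => (1 + ∑ e, |x.1 e|) * ∏ e, w b (x.1 e) (x.2 e)) ρ)
    (f : (E → ℝ) × (E → Bool) → ℝ) (hfm : Measurable f)
    (M : ℝ) (hfb : ∀ x, |f x| ≤ M)
    (β : ℝ) (hβ : 0 < β)
    (G : E → (E → ℝ) × (E → Bool) → ℝ)
    (hG : ∀ e x, G e x = (if x.1 e = 0 then 0 else
      2 * x.1 e * (if x.2 e then (1:ℝ) else 0) / (1 - Real.exp (-2 * β * x.1 e))) - x.1 e)
    (Ex : ℝ → ((E → ℝ) × (E → Bool) → ℝ) → ℝ)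
    (hEx : ∀ b h, Ex b h = (∫ x, h x * ∏ e, w b (x.1 e) (x.2 e) ∂ρ)
      / (∫ x, ∏ e, w b (x.1 e) (x.2 e) ∂ρ)) :
    HasDerivAt (fun b => Ex b f)
      (∑ e : E, (Ex β (fun x => f x * G e x) - Ex β f * Ex β (G e))) β :=
  stmt_11_general ρ hpos w hw Zpos hint f hfm M hfb β hβ G hG Ex hEx
end

section
/- Let μ be a probability measure on {0,1}^E satisfying the FKG inequality, e ∈ E with μ[ω_e = 1] > 0, and suppose the conditional measure μ[· | ω_e = 1] also satisfies the FKG inequality. Let f be increasing with values in [0,1], let g: Ω → [0,1] be increasing, and ε ≥ 0 with μ[g | ω_e = 1] ≥ ε. Then Cov_μ(f, (g - ε)·ω_e) ≥ 0, and consequently Cov_μ(f, g·ω_e) ≥ ε·Cov_μ(f, ω_e). -/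
open MeasureTheory ProbabilityTheory in
theorem stmt_16 {E : Type*} [Fintype E] (μ : Measure (E → Bool)) [IsProbabilityMeasure μ]
    (e : E) (A : Set (E → Bool)) (hA : A = {ω | ω e = true}) (hApos : 0 < (μ A).toReal)
    (hFKG : ∀ f g : (E → Bool) → ℝ, Monotone f → Monotone g →
      (∫ ω, f ω ∂μ) * (∫ ω, g ω ∂μ) ≤ ∫ ω, f ω * g ω ∂μ)
    (hFKGcond : ∀ f g : (E → Bool) → ℝ, Monotone f → Monotone g →
      (∫ ω, f ω ∂(μ[|A])) * (∫ ω, g ω ∂(μ[|A])) ≤ ∫ ω, f ω * g ω ∂(μ[|A]))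
    (f g : (E → Bool) → ℝ) (hf : Monotone f) (hg : Monotone g)
    (hf01 : ∀ ω, f ω ∈ Set.Icc (0:ℝ) 1) (hg01 : ∀ ω, g ω ∈ Set.Icc (0:ℝ) 1)
    (ε : ℝ) (hε : 0 ≤ ε) (hgε : ε ≤ ∫ ω, g ω ∂(μ[|A])) :
    0 ≤ (∫ ω, f ω * ((g ω - ε) * (if ω e then (1:ℝ) else 0)) ∂μ)
        - (∫ ω, f ω ∂μ) * (∫ ω, (g ω - ε) * (if ω e then (1:ℝ) else 0) ∂μ) ∧
    ε * ((∫ ω, f ω * (if ω e then (1:ℝ) else 0) ∂μ)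
        - (∫ ω, f ω ∂μ) * (∫ ω, (if ω e then (1:ℝ) else 0) ∂μ))
      ≤ (∫ ω, f ω * (g ω * (if ω e then (1:ℝ) else 0)) ∂μ)
        - (∫ ω, f ω ∂μ) * (∫ ω, g ω * (if ω e then (1:ℝ) else 0) ∂μ) := by
  have hAne : μ A ≠ 0 := by
    intro h; rw [h] at hApos; simp at hApos
  have hAfin : μ A ≠ ⊤ := measure_ne_top μ A
  have hAmeas : MeasurableSet A := by
    have h1 : MeasurableSet ((fun ω : E → Bool => ω e) ⁻¹' {true}) :=
      (measurable_pi_apply e) (measurableSet_singleton true)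
    rw [hA]
    exact h1
  haveI : IsProbabilityMeasure (μ[|A]) := cond_isProbabilityMeasure hAne
  set a := (μ A).toReal with ha
  -- key identity
  have key : ∀ h : (E → Bool) → ℝ,
      (∫ ω, h ω * (if ω e then (1:ℝ) else 0) ∂μ) = a * ∫ ω, h ω ∂(μ[|A]) := by
    intro h
    have h1 : (∫ ω, h ω ∂(μ[|A])) = a⁻¹ * ∫ ω, h ω ∂(μ.restrict A) := by
      rw [ProbabilityTheory.cond, integral_smul_measure, ENNReal.toReal_inv]
      rfl
    have h2 : (∫ ω, h ω ∂(μ.restrict A)) = ∫ ω, A.indicator h ω ∂μ := by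
      rw [integral_indicator hAmeas]
    have h3 : ∀ ω, A.indicator h ω = h ω * (if ω e then (1:ℝ) else 0) := by
      intro ω
      simp only [Set.indicator, hA, Set.mem_setOf_eq]
      by_cases hw : ω e <;> simp [hw]
    rw [h1]
    rw [h2]
    rw [show (∫ ω, A.indicator h ω ∂μ) = ∫ ω, h ω * (if ω e then (1:ℝ) else 0) ∂μ from
      integral_congr_ae (Filter.Eventually.of_forall h3)]
    field_simp
  have ha0 : 0 < a := hApos
  -- integrability
  have hint : ∀ (ν : Measure (E → Bool)) [IsFiniteMeasure ν] (h : (E → Bool) → ℝ),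
      Integrable h ν := by
    intro ν _ h
    exact .of_finite
  -- monotone indicator
  have hχ : Monotone (fun ω : E → Bool => if ω e then (1:ℝ) else 0) := by
    intro x y hxy
    have h := hxy e
    by_cases hx : x e <;> by_cases hy : y e
    · simp [hx, hy]
    · rw [Bool.not_eq_true] at hy
      rw [hx, hy] at h
      exact Bool.noConfusion (Bool.le_iff_imp.mp h rfl)
    · simp [hx, hy]
    · simp [hx, hy]
  -- F ≤ Fc
  set F := ∫ ω, f ω ∂μ with hF
  set Fc := ∫ ω, f ω ∂(μ[|A]) with hFc
  set Gc := ∫ ω, g ω ∂(μ[|A]) with hGc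
  have hFnn : 0 ≤ F := integral_nonneg (fun ω => (hf01 ω).1)
  have hFle : F ≤ Fc := by
    have := hFKG f _ hf hχ
    rw [key f] at this
    have hχint : (∫ ω, (if ω e then (1:ℝ) else 0) ∂μ) = a := by
      have := key (fun _ => (1:ℝ))
      simpa using this
    rw [hχint] at this
    nlinarith
  -- conditional FKG for f and g - ε
  have hcond : Fc * (Gc - ε) ≤ ∫ ω, f ω * (g ω - ε) ∂(μ[|A]) := by
    have hmg : Monotone (fun ω => g ω - ε) := fun x y h => by
      simpa using hg h
    have h1 := hFKGcond f _ hf hmg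
    have h2 : (∫ ω, (g ω - ε) ∂(μ[|A])) = Gc - ε := by
      rw [integral_sub (hint _ g) (hint _ _)]
      simp [hGc]
    rw [h2] at h1
    exact h1
  -- Cov1 expression
  have e1 : (∫ ω, f ω * ((g ω - ε) * (if ω e then (1:ℝ) else 0)) ∂μ)
      = a * ∫ ω, f ω * (g ω - ε) ∂(μ[|A]) := by
    have := key (fun ω => f ω * (g ω - ε))
    simpa [mul_assoc] using this
  have e2 : (∫ ω, (g ω - ε) * (if ω e then (1:ℝ) else 0) ∂μ) = a * (Gc - ε) := by
    rw [key (fun ω => g ω - ε)]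
    rw [integral_sub (hint _ g) (hint _ _)]
    simp [hGc]
  have cov1 : 0 ≤ (∫ ω, f ω * ((g ω - ε) * (if ω e then (1:ℝ) else 0)) ∂μ)
      - F * (∫ ω, (g ω - ε) * (if ω e then (1:ℝ) else 0) ∂μ) := by
    rw [e1, e2]
    have hGε : 0 ≤ Gc - ε := by linarith
    have h1 := mul_le_mul_of_nonneg_left hcond ha0.le
    have h2 := mul_le_mul_of_nonneg_left (mul_le_mul_of_nonneg_right hFle hGε) ha0.le
    nlinarith [h1, h2]
  refine ⟨cov1, ?_⟩
  -- linearity: rewrite the (g-ε) integrals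
  have l1 : (∫ ω, f ω * ((g ω - ε) * (if ω e then (1:ℝ) else 0)) ∂μ)
      = (∫ ω, f ω * (g ω * (if ω e then (1:ℝ) else 0)) ∂μ)
        - ε * (∫ ω, f ω * (if ω e then (1:ℝ) else 0) ∂μ) := by
    have : (fun ω => f ω * ((g ω - ε) * (if ω e then (1:ℝ) else 0)))
        = fun ω => f ω * (g ω * (if ω e then (1:ℝ) else 0))
          - ε * (f ω * (if ω e then (1:ℝ) else 0)) := by
      funext ω; ring
    rw [this, integral_sub (hint _ _) (hint _ _), integral_const_mul]
  have l2 : (∫ ω, (g ω - ε) * (if ω e then (1:ℝ) else 0) ∂μ)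
      = (∫ ω, g ω * (if ω e then (1:ℝ) else 0) ∂μ)
        - ε * (∫ ω, (if ω e then (1:ℝ) else 0) ∂μ) := by
    have : (fun ω => (g ω - ε) * (if ω e then (1:ℝ) else 0))
        = fun ω => g ω * (if ω e then (1:ℝ) else 0)
          - ε * (if ω e then (1:ℝ) else 0) := by
      funext ω; ring
    rw [this, integral_sub (hint _ _) (hint _ _), integral_const_mul]
  rw [l1, l2] at cov1
  nlinarith [cov1]
end

section
/- Let (V_1,…,V_n) be independent random variables, and let F, G be real-valued functions on ℝ^n each monotone nondecreasing in every coordinate and square-integrable. Then E[F(V)G(V)] ≥ E[F(V)]E[G(V)]. -/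
/-!
Call a measure positively associated if `(∫ f) * (∫ g) ≤ ∫ f * g` for all bounded measurable
monotone `f`, `g`. On a linear order this is Chebyshev's integral inequality: integrate
`(f x - f y) * (g x - g y) ≥ 0` against `ν ⊗ ν`. Association passes to products by Fubini: freeze
the first coordinate, apply association of the second factor to the sections, then association of
the first factor to the partial integrals, which are again bounded and monotone. Induction on `n`
gives association of `Measure.pi μ`, and truncating `F` and `G` at level `k` extends the inequality
to square-integrable functions by dominated convergence.
-/

open MeasureTheory Filter Topology

theorem Monovary.integral_mul_integral_le_integral_mul {α : Type*} [MeasurableSpace α]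
    {ν : Measure α} [IsProbabilityMeasure ν] {f g : α → ℝ} (hfg : Monovary f g)
    (hf : Integrable f ν) (hg : Integrable g ν) (hfgi : Integrable (fun x => f x * g x) ν) :
    (∫ x, f x ∂ν) * (∫ x, g x ∂ν) ≤ ∫ x, f x * g x ∂ν := by
  have hfg₁ : Integrable (fun p : α × α => f p.1 * g p.2) (ν.prod ν) := hf.mul_prod hg
  have hfg₂ : Integrable (fun p : α × α => f p.2 * g p.1) (ν.prod ν) := by
    simpa only [mul_comm] using hg.mul_prod hf
  have swap : ∫ p : α × α, f p.2 * g p.1 ∂(ν.prod ν) = (∫ x, g x ∂ν) * ∫ x, f x ∂ν := by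
    simpa only [mul_comm] using integral_prod_mul (μ := ν) (ν := ν) g f
  have hrearrangement := integral_mono (hfg₁.add hfg₂) ((hfgi.comp_fst ν).add (hfgi.comp_snd ν))
    fun p => hfg.mul_add_mul_le_mul_add_mul p.1 p.2
  rw [integral_add' hfg₁ hfg₂, integral_add' (hfgi.comp_fst ν) (hfgi.comp_snd ν),
    integral_prod_mul f g, swap, integral_fun_fst (fun x => f x * g x),
    integral_fun_snd (fun x => f x * g x)] at hrearrangement
  simp only [probReal_univ, one_smul] at hrearrangement
  linarith

theorem Fin.monotone_insertNth {n : ℕ} {X : Fin (n + 1) → Type*} [∀ i, Preorder (X i)]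
    (i : Fin (n + 1)) :
    Monotone fun p : X i × (∀ j, X (i.succAbove j)) => i.insertNth p.1 p.2 := fun _ _ hpq =>
  Fin.insertNth_le_iff.2 ⟨by simpa using hpq.1, fun j => by simpa using hpq.2 j⟩

def truncation (k : ℕ) (t : ℝ) : ℝ := max (-k) (min k t)

theorem monotone_truncation (k : ℕ) : Monotone (truncation k) :=
  monotone_const.max (monotone_const.min monotone_id)

theorem continuous_truncation (k : ℕ) : Continuous (truncation k) := by
  unfold truncation
  fun_prop

theorem abs_truncation_le_abs (k : ℕ) (t : ℝ) : |truncation k t| ≤ |t| := by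
  unfold truncation
  grind

theorem abs_truncation_le (k : ℕ) (t : ℝ) : |truncation k t| ≤ k := by
  unfold truncation
  grind

theorem truncation_eq_self {k : ℕ} {t : ℝ} (h : |t| ≤ k) : truncation k t = t := by
  unfold truncation
  rw [abs_le] at h
  rw [min_eq_right h.2, max_eq_right h.1]

theorem tendsto_truncation (t : ℝ) : Tendsto (truncation · t) atTop (𝓝 t) :=
  tendsto_atTop_of_eventually_const fun _ hk =>
    truncation_eq_self ((Nat.le_ceil |t|).trans (by exact_mod_cast hk))

section PositivelyAssociated

variable {α β : Type*} [MeasurableSpace α] [MeasurableSpace β]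

theorem tendsto_integral_truncation {μ : Measure α} {f : α → ℝ} (hf : Integrable f μ) :
    Tendsto (fun k : ℕ => ∫ x, truncation k (f x) ∂μ) atTop (𝓝 (∫ x, f x ∂μ)) :=
  tendsto_integral_of_dominated_convergence (fun x => ‖f x‖)
    (fun k => (continuous_truncation k).comp_aestronglyMeasurable hf.1) hf.norm
    (fun k => .of_forall fun x => abs_truncation_le_abs k (f x))
    (.of_forall fun x => tendsto_truncation (f x))

/-- Bounded test functions make every section in the Fubini argument integrable. -/
def PositivelyAssociated [Preorder α] (μ : Measure α) : Prop :=
  ∀ ⦃f g : α → ℝ⦄, Monotone f → Monotone g → Measurable f → Measurable g →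
    (∃ C, ∀ x, ‖f x‖ ≤ C) → (∃ C, ∀ x, ‖g x‖ ≤ C) →
      (∫ x, f x ∂μ) * (∫ x, g x ∂μ) ≤ ∫ x, f x * g x ∂μ

theorem positivelyAssociated_of_monovary [Preorder α] (μ : Measure α) [IsProbabilityMeasure μ]
    (h : ∀ f g : α → ℝ, Monotone f → Monotone g → Monovary f g) : PositivelyAssociated μ := by
  rintro f g hf hg hfm hgm ⟨C, hC⟩ ⟨D, hD⟩
  exact (h f g hf hg).integral_mul_integral_le_integral_mul
    (.of_bound hfm.aestronglyMeasurable C (.of_forall hC))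
    (.of_bound hgm.aestronglyMeasurable D (.of_forall hD))
    (.of_bound (hfm.mul hgm).aestronglyMeasurable (C * D)
      (.of_forall fun x => norm_mul_le_of_le (hC x) (hD x)))

theorem positivelyAssociated_of_linearOrder [LinearOrder α] (μ : Measure α)
    [IsProbabilityMeasure μ] : PositivelyAssociated μ :=
  positivelyAssociated_of_monovary μ fun _ _ hf hg => hf.monovary hg

theorem positivelyAssociated_of_subsingleton [Preorder α] [Subsingleton α] (μ : Measure α)
    [IsProbabilityMeasure μ] : PositivelyAssociated μ :=
  positivelyAssociated_of_monovary μ fun _ _ _ _ i j hij =>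
    absurd (Subsingleton.elim i j ▸ hij) (lt_irrefl _)

theorem PositivelyAssociated.of_measurePreserving [Preorder α] [Preorder β] {μ : Measure α}
    {ν : Measure β} (hν : PositivelyAssociated ν) {e : β → α} (he : MeasurePreserving e ν μ)
    (he_mono : Monotone e) : PositivelyAssociated μ := by
  rintro f g hf hg hfm hgm ⟨C, hC⟩ ⟨D, hD⟩
  have hcomp {h : α → ℝ} (hm : Measurable h) : ∫ y, h (e y) ∂ν = ∫ x, h x ∂μ := by
    rw [← he.map_eq, integral_map he.measurable.aemeasurable hm.aestronglyMeasurable]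
  rw [← hcomp hfm, ← hcomp hgm, ← hcomp (h := fun x => f x * g x) (hfm.mul hgm)]
  exact hν (hf.comp he_mono) (hg.comp he_mono) (hfm.comp he.measurable)
    (hgm.comp he.measurable) ⟨C, fun y => hC (e y)⟩ ⟨D, fun y => hD (e y)⟩

theorem Monotone.integral_prod_right [Preorder α] [Preorder β] {ν : Measure β}
    [IsFiniteMeasure ν] {f : α × β → ℝ} (hf : Monotone f) (hfm : Measurable f) {C : ℝ}
    (hC : ∀ p, ‖f p‖ ≤ C) : Monotone fun x => ∫ y, f (x, y) ∂ν := by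
  have hsection (x : α) : Integrable (fun y => f (x, y)) ν :=
    .of_bound (hfm.comp measurable_prodMk_left).aestronglyMeasurable C (.of_forall fun y => hC _)
  exact fun x x' hx => integral_mono (hsection x) (hsection x') fun _ => hf ⟨hx, le_rfl⟩

theorem PositivelyAssociated.prod [Preorder α] [Preorder β] {μ : Measure α} {ν : Measure β}
    [IsProbabilityMeasure μ] [IsProbabilityMeasure ν] (hμ : PositivelyAssociated μ)
    (hν : PositivelyAssociated ν) : PositivelyAssociated (μ.prod ν) := by
  rintro f g hf hg hfm hgm ⟨C, hC⟩ ⟨D, hD⟩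
  have hfi : Integrable f (μ.prod ν) := .of_bound hfm.aestronglyMeasurable C (.of_forall hC)
  have hgi : Integrable g (μ.prod ν) := .of_bound hgm.aestronglyMeasurable D (.of_forall hD)
  have hfgi : Integrable (fun p => f p * g p) (μ.prod ν) :=
    .of_bound (hfm.mul hgm).aestronglyMeasurable (C * D)
      (.of_forall fun p => norm_mul_le_of_le (hC p) (hD p))
  have hf₁C (x : α) : ‖∫ y, f (x, y) ∂ν‖ ≤ C := by
    simpa using norm_integral_le_of_norm_le_const (μ := ν) (.of_forall fun y => hC (x, y))
  have hg₁D (x : α) : ‖∫ y, g (x, y) ∂ν‖ ≤ D := by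
    simpa using norm_integral_le_of_norm_le_const (μ := ν) (.of_forall fun y => hD (x, y))
  have hf₁m := hfm.stronglyMeasurable.integral_prod_right' (ν := ν) |>.measurable
  have hg₁m := hgm.stronglyMeasurable.integral_prod_right' (ν := ν) |>.measurable
  have hsection (x : α) :
      (∫ y, f (x, y) ∂ν) * (∫ y, g (x, y) ∂ν) ≤ ∫ y, f (x, y) * g (x, y) ∂ν :=
    hν (fun _ _ hy => hf ⟨le_rfl, hy⟩) (fun _ _ hy => hg ⟨le_rfl, hy⟩)
      (hfm.comp measurable_prodMk_left) (hgm.comp measurable_prodMk_left)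
      ⟨C, fun y => hC (x, y)⟩ ⟨D, fun y => hD (x, y)⟩
  calc (∫ p, f p ∂μ.prod ν) * ∫ p, g p ∂μ.prod ν
      = (∫ x, ∫ y, f (x, y) ∂ν ∂μ) * ∫ x, ∫ y, g (x, y) ∂ν ∂μ := by
        rw [integral_prod f hfi, integral_prod g hgi]
    _ ≤ ∫ x, (∫ y, f (x, y) ∂ν) * ∫ y, g (x, y) ∂ν ∂μ :=
        hμ (hf.integral_prod_right hfm hC) (hg.integral_prod_right hgm hD) hf₁m hg₁m
          ⟨C, hf₁C⟩ ⟨D, hg₁D⟩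
    _ ≤ ∫ x, ∫ y, f (x, y) * g (x, y) ∂ν ∂μ :=
        integral_mono (.of_bound (hf₁m.mul hg₁m).aestronglyMeasurable (C * D)
          (.of_forall fun x => norm_mul_le_of_le (hf₁C x) (hg₁D x))) hfgi.integral_prod_left
          hsection
    _ = ∫ p, f p * g p ∂μ.prod ν := (integral_prod _ hfgi).symm

theorem positivelyAssociated_pi {n : ℕ} {X : Fin n → Type*} [∀ i, Preorder (X i)]
    [∀ i, MeasurableSpace (X i)] (μ : ∀ i, Measure (X i)) [∀ i, IsProbabilityMeasure (μ i)]
    (hμ : ∀ i, PositivelyAssociated (μ i)) : PositivelyAssociated (Measure.pi μ) := by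
  induction n with
  | zero => exact positivelyAssociated_of_subsingleton _
  | succ n ih =>
    exact ((hμ 0).prod (ih _ fun j => hμ _)).of_measurePreserving
      (measurePreserving_piFinSuccAbove μ 0).symm (Fin.monotone_insertNth 0)

theorem PositivelyAssociated.integral_mul_integral_le_integral_mul [Preorder α] {μ : Measure α}
    (hμ : PositivelyAssociated μ) {f g : α → ℝ} (hf : Monotone f) (hg : Monotone g)
    (hfm : Measurable f) (hgm : Measurable g) (hfi : Integrable f μ) (hgi : Integrable g μ)
    (hfgi : Integrable (fun x => f x * g x) μ) :
    (∫ x, f x ∂μ) * (∫ x, g x ∂μ) ≤ ∫ x, f x * g x ∂μ := by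
  have htruncated (k : ℕ) :
      (∫ x, truncation k (f x) ∂μ) * (∫ x, truncation k (g x) ∂μ)
        ≤ ∫ x, truncation k (f x) * truncation k (g x) ∂μ :=
    hμ ((monotone_truncation k).comp hf) ((monotone_truncation k).comp hg)
      ((continuous_truncation k).measurable.comp hfm)
      ((continuous_truncation k).measurable.comp hgm)
      ⟨k, fun x => abs_truncation_le k (f x)⟩ ⟨k, fun x => abs_truncation_le k (g x)⟩
  have hprod : Tendsto (fun k : ℕ => ∫ x, truncation k (f x) * truncation k (g x) ∂μ) atTop
      (𝓝 (∫ x, f x * g x ∂μ)) :=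
    tendsto_integral_of_dominated_convergence (fun x => ‖f x * g x‖)
      (fun k => ((continuous_truncation k).comp_aestronglyMeasurable hfi.1).mul
        ((continuous_truncation k).comp_aestronglyMeasurable hgi.1))
      hfgi.norm
      (fun k => .of_forall fun x => by
        simpa only [norm_mul, Real.norm_eq_abs] using mul_le_mul (abs_truncation_le_abs k (f x))
          (abs_truncation_le_abs k (g x)) (abs_nonneg _) (abs_nonneg _))
      (.of_forall fun x => (tendsto_truncation (f x)).mul (tendsto_truncation (g x)))
  exact le_of_tendsto_of_tendsto'
    ((tendsto_integral_truncation hfi).mul (tendsto_integral_truncation hgi)) hprod htruncated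

end PositivelyAssociated

open MeasureTheory in
theorem stmt_18 (n : ℕ) (μ : Fin n → Measure ℝ) [∀ i, IsProbabilityMeasure (μ i)]
    (F G : (Fin n → ℝ) → ℝ) (hF : Monotone F) (hG : Monotone G)
    (hFm : Measurable F) (hGm : Measurable G)
    (hF2 : MemLp F 2 (Measure.pi μ)) (hG2 : MemLp G 2 (Measure.pi μ)) :
    (∫ v, F v ∂(Measure.pi μ)) * (∫ v, G v ∂(Measure.pi μ))
      ≤ ∫ v, F v * G v ∂(Measure.pi μ) :=
  (positivelyAssociated_pi μ fun i => positivelyAssociated_of_linearOrder (μ i))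
    |>.integral_mul_integral_le_integral_mul hF hG hFm hGm (hF2.integrable one_le_two)
      (hG2.integrable one_le_two) (hF2.integrable_mul hG2)
end
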